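/- arXiv:1307.1661 — 4 statements merged into one kernel-verified Lean document; each statement's English description precedes it below -/
import Mathlib

section
/- Let b > a > 0, x ∈ ℝ^d, and let K be a cube containing B(x,a) with K ∩ ∂B(x,b) ≠ ∅. Let ω be a finite set of points in K and consider the complete graph (V,E) on ω with each edge weighted by the Euclidean distance between its endpoints. If ω contains a K-wall around B(x,a) in B(x,b), then no edge of E with one endpoint in B(x,a) and the other endpoint in the complement of B(x,b) belongs to any minimal spanning tree of (V,E). -/
open MeasureTheory Metric Set

noncomputable section

open Classical in
/-- Total edge weight of a graph (when its edge set is finite; `0` otherwise). -/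
def SimpleGraph.weightSum {V : Type*} (T : SimpleGraph V) (w : Sym2 V → ℝ) : ℝ :=
  if h : T.edgeSet.Finite then ∑ e ∈ h.toFinset, w e else 0

/-- `T` is a spanning tree of `G`. -/
def SimpleGraph.IsSpanningTreeOf {V : Type*} (T G : SimpleGraph V) : Prop :=
  T ≤ G ∧ T.Connected ∧ T.IsAcyclic

/-- Weight of a minimal spanning tree of `G` under edge weights `w`. -/
def mstWeight {V : Type*} (G : SimpleGraph V) (w : Sym2 V → ℝ) : ℝ :=
  sInf ((fun T => SimpleGraph.weightSum T w) '' {T | T.IsSpanningTreeOf G})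

/-- Euclidean edge weights on the complete graph on a set of points. -/
def euclWeight {d : ℕ} (s : Set (EuclideanSpace ℝ (Fin d))) : Sym2 s → ℝ :=
  Sym2.lift ⟨fun x y => dist (x : EuclideanSpace ℝ (Fin d)) (y : EuclideanSpace ℝ (Fin d)),
    fun _ _ => dist_comm _ _⟩

/-- Weight of a Euclidean minimal spanning tree of the complete graph on `s`. -/
def euclMST {d : ℕ} (s : Set (EuclideanSpace ℝ (Fin d))) : ℝ :=
  mstWeight (⊤ : SimpleGraph s) (euclWeight s)

/-- The closed `L^∞`-ball (a cube) `x + [-a,a]^d`. -/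
def box {d : ℕ} (x : EuclideanSpace ℝ (Fin d)) (a : ℝ) : Set (EuclideanSpace ℝ (Fin d)) :=
  {y | ∀ i, |y i - x i| ≤ a}

/-- `K` is a cube. -/
def IsCube {d : ℕ} (K : Set (EuclideanSpace ℝ (Fin d))) : Prop :=
  ∃ z s, 0 < s ∧ K = box z s

/-- `W` contains a `K`-wall around `B(x,a)` in `B(x,b)`: for any `p₁ ∈ ∂B(x,a)` and
`p₂ ∈ K ∩ ∂B(x,b)`, the set
`K ∩ W ∩ S(p₁, 3d(p₁,p₂)/4) ∩ S(p₂, 3d(p₁,p₂)/4) ∩ (B(x,b) \ B(x,a))` is nonempty. -/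
def ContainsWall {d : ℕ} (W K : Set (EuclideanSpace ℝ (Fin d)))
    (x : EuclideanSpace ℝ (Fin d)) (a b : ℝ) : Prop :=
  ∀ p₁ ∈ frontier (box x a), ∀ p₂ ∈ K ∩ frontier (box x b),
    (K ∩ W ∩ closedBall p₁ (3 * dist p₁ p₂ / 4) ∩
      closedBall p₂ (3 * dist p₁ p₂ / 4) ∩ (box x b \ box x a)).Nonempty

end

/-!
The segment from `y₁ ∈ B(x,a)` to `y₂ ∉ B(x,b)` leaves `B(x,a)` at some `p₁` and then
`B(x,b)` at some `p₂`. The wall supplies a point `q ∈ ω` within `3/4 · |p₁ p₂|` of both, so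
`q` is strictly closer than `|y₁ y₂|` to each of `y₁` and `y₂`: the edge `y₁ y₂` is strictly
the longest side of the triangle `y₁ q y₂`. Removing it from a spanning tree `T` leaves two
components; joining `q` to the endpoint not in its component gives a lighter spanning tree.
-/

lemma euclWeight_mk {d : ℕ} {s : Set (EuclideanSpace ℝ (Fin d))} (y z : s) :
    euclWeight s s(y, z) = dist (y : EuclideanSpace ℝ (Fin d)) z :=
  rfl

lemma IsPreconnected.inter_frontier_nonempty {X : Type*} [TopologicalSpace X] {s t : Set X}
    (hs : IsPreconnected s) (hst : (s ∩ t).Nonempty) (hs_diff : (s \ t).Nonempty) :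
    (s ∩ frontier t).Nonempty := by
  by_contra h
  have hsub : s ⊆ interior t ∪ (closure t)ᶜ := fun z hz => by
    by_contra hz'
    simp only [mem_union, mem_compl_iff, not_or, not_not] at hz'
    exact h ⟨z, hz, hz'.2, hz'.1⟩
  rcases hs.subset_or_subset isOpen_interior isClosed_closure.isOpen_compl
      (disjoint_compl_right.mono_left interior_subset_closure) hsub with hint | hext
  · obtain ⟨z, hz, hzt⟩ := hs_diff
    exact hzt (interior_subset (hint hz))
  · obtain ⟨z, hz, hzt⟩ := hst
    exact hext hz (subset_closure hzt)

lemma dist_lt_of_near_subsegment {E : Type*} [NormedAddCommGroup E] [NormedSpace ℝ E]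
    {y₁ y₂ p₁ p₂ q : E} (hp₁ : p₁ ∈ segment ℝ y₁ y₂) (hp₂ : p₂ ∈ segment ℝ p₁ y₂)
    (hq₁ : dist q p₁ < dist p₁ p₂) (hq₂ : dist q p₂ < dist p₁ p₂) :
    dist y₁ q < dist y₁ y₂ ∧ dist q y₂ < dist y₁ y₂ := by
  have h₁ := dist_add_dist_of_mem_segment hp₁
  have h₂ := dist_add_dist_of_mem_segment hp₂
  constructor
  · linarith [dist_triangle y₁ p₁ q, dist_comm p₁ q, dist_nonneg (x := p₂) (y := y₂)]
  · linarith [dist_triangle q p₂ y₂, dist_nonneg (x := y₁) (y := p₁)]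

section Box

variable {d : ℕ} {x : EuclideanSpace ℝ (Fin d)} {a b : ℝ}

lemma box_eq_iInter : box x a = ⋂ i, EuclideanSpace.proj i ⁻¹' closedBall (x i) a := by
  ext y
  simp [box, Real.dist_eq]

lemma isClosed_box : IsClosed (box x a) := by
  rw [box_eq_iInter]
  exact isClosed_iInter fun i => isClosed_closedBall.preimage (EuclideanSpace.proj i).continuous

lemma convex_box : Convex ℝ (box x a) := by
  rw [box_eq_iInter]
  exact convex_iInter fun i => (convex_closedBall _ _).linear_preimage (EuclideanSpace.projₗ i)

lemma box_mono (hab : a ≤ b) : box x a ⊆ box x b :=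
  fun _ hy i => (hy i).trans hab

lemma box_subset_interior_box (hab : a < b) : box x a ⊆ interior (box x b) := by
  intro y hy
  refine interior_maximal (t := ⋂ i, EuclideanSpace.proj i ⁻¹' ball (x i) b) ?_ ?_ ?_
  · rw [box_eq_iInter]
    exact iInter_mono fun i => preimage_mono ball_subset_closedBall
  · exact isOpen_iInter_of_finite fun i => isOpen_ball.preimage (EuclideanSpace.proj i).continuous
  · simp only [mem_iInter, mem_preimage, mem_ball, Real.dist_eq]
    exact fun i => (hy i).trans_lt hab

end Box

lemma ContainsWall.exists_mem_dist_lt {d : ℕ} {W K : Set (EuclideanSpace ℝ (Fin d))}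
    {x : EuclideanSpace ℝ (Fin d)} {a b : ℝ} (hwall : ContainsWall W K x a b)
    (hK : Convex ℝ K) (hab : a < b) {y₁ y₂ : EuclideanSpace ℝ (Fin d)} (hy₁ : y₁ ∈ K)
    (hy₂ : y₂ ∈ K) (h₁ : y₁ ∈ box x a) (h₂ : y₂ ∉ box x b) :
    ∃ q ∈ W, dist y₁ q < dist y₁ y₂ ∧ dist q y₂ < dist y₁ y₂ := by
  obtain ⟨p₁, hp₁, hp₁a⟩ := (convex_segment y₁ y₂).isPreconnected.inter_frontier_nonempty
    ⟨y₁, left_mem_segment ℝ _ _, h₁⟩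
    ⟨y₂, right_mem_segment ℝ _ _, fun h => h₂ (box_mono hab.le h)⟩
  have hp₁_mem : p₁ ∈ box x a := isClosed_box.frontier_subset hp₁a
  obtain ⟨p₂, hp₂, hp₂b⟩ := (convex_segment p₁ y₂).isPreconnected.inter_frontier_nonempty
    ⟨p₁, left_mem_segment ℝ _ _, box_mono hab.le hp₁_mem⟩ ⟨y₂, right_mem_segment ℝ _ _, h₂⟩
  have hp₁K : p₁ ∈ K := hK.segment_subset hy₁ hy₂ hp₁
  have hp₂K : p₂ ∈ K := hK.segment_subset hp₁K hy₂ hp₂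
  have hp₁₂ : 0 < dist p₁ p₂ :=
    dist_pos.mpr fun h => hp₂b.2 (box_subset_interior_box hab (h ▸ hp₁_mem))
  obtain ⟨q, ⟨⟨⟨⟨-, hqW⟩, hq₁⟩, hq₂⟩, -⟩⟩ := hwall p₁ hp₁a p₂ ⟨hp₂K, hp₂b⟩
  exact ⟨q, hqW, dist_lt_of_near_subsegment hp₁ hp₂
    ((mem_closedBall.mp hq₁).trans_lt (by linarith))
    ((mem_closedBall.mp hq₂).trans_lt (by linarith))⟩

namespace SimpleGraph

variable {V : Type*} {G T : SimpleGraph V} {u v c : V}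

lemma Reachable.deleteEdges_or {w : V} (h : G.Reachable w u) (v : V) :
    (G.deleteEdges {s(u, v)}).Reachable w u ∨ (G.deleteEdges {s(u, v)}).Reachable w v := by
  obtain ⟨p⟩ := h
  induction p with
  | nil => exact .inl .rfl
  | @cons w w' u hadj _ ih =>
    by_cases he : s(w, w') = s(u, v)
    · rcases Sym2.eq_iff.mp he with ⟨rfl, -⟩ | ⟨rfl, -⟩
      exacts [.inl .rfl, .inr .rfl]
    · have hadj' : (G.deleteEdges {s(u, v)}).Adj w w' := (deleteEdges_adj ..).mpr ⟨hadj, he⟩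
      exact ih.imp hadj'.reachable.trans hadj'.reachable.trans

lemma edgeSet_deleteEdges_sup_edge (huc : u ≠ c) :
    (T.deleteEdges {s(u, v)} ⊔ edge u c).edgeSet = insert s(u, c) (T.edgeSet \ {s(u, v)}) := by
  rw [edgeSet_sup, edgeSet_deleteEdges, edgeSet_edge_of_ne huc, union_singleton]

lemma IsAcyclic.not_adj_of_reachable_deleteEdges (hT : T.IsAcyclic) (huv : T.Adj u v)
    (hc : (T.deleteEdges {s(u, v)}).Reachable c v) (hcv : c ≠ v) : ¬ T.Adj u c := by
  intro huc
  have huc' : (T.deleteEdges {s(u, v)}).Adj u c :=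
    (deleteEdges_adj ..).mpr ⟨huc, fun h => hcv (Sym2.congr_right.mp h)⟩
  exact isBridge_iff.mp (isAcyclic_iff_forall_adj_isBridge.mp hT huv) (huc'.reachable.trans hc)

lemma IsTree.deleteEdges_sup_edge [Finite V] (hT : T.IsTree) (huv : T.Adj u v)
    (hc : (T.deleteEdges {s(u, v)}).Reachable c v) (hcu : c ≠ u) (hcv : c ≠ v) :
    (T.deleteEdges {s(u, v)} ⊔ edge u c).IsTree := by
  have hcu' : (T.deleteEdges {s(u, v)} ⊔ edge u c).Adj c u :=
    (sup_adj ..).mpr (.inr ((edge_adj ..).mpr ⟨.inr ⟨rfl, rfl⟩, hcu⟩))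
  have hreach : ∀ w, (T.deleteEdges {s(u, v)} ⊔ edge u c).Reachable w u := fun w =>
    ((hT.connected w u).deleteEdges_or v).elim (·.mono le_sup_left) fun hwv =>
      ((hwv.trans hc.symm).mono le_sup_left).trans hcu'.reachable
  have huc := hT.isAcyclic.not_adj_of_reachable_deleteEdges huv hc hcv
  rw [isTree_iff_connected_and_card] at hT ⊢
  refine ⟨(connected_iff_exists_forall_reachable _).2 ⟨u, fun w => (hreach w).symm⟩, ?_⟩
  rw [← hT.2, Nat.card_coe_set_eq, Nat.card_coe_set_eq, edgeSet_deleteEdges_sup_edge hcu.symm,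
    ncard_insert_of_notMem fun h => huc h.1, ncard_sdiff_singleton_add_one (T.mem_edgeSet.mpr huv)]

lemma weightSum_eq_of_edgeSet_eq_insert [Finite V] {T' : SimpleGraph V} (w : Sym2 V → ℝ)
    {e e' : Sym2 V} (he : e ∈ T.edgeSet) (he' : e' ∉ T.edgeSet)
    (hE : T'.edgeSet = insert e' (T.edgeSet \ {e})) :
    T'.weightSum w = T.weightSum w - w e + w e' := by
  classical
  rw [weightSum, weightSum, dif_pos (toFinite _), dif_pos (toFinite _)]
  have hfin : (toFinite T'.edgeSet).toFinset =
      insert e' ((toFinite T.edgeSet).toFinset.erase e) := by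
    ext f
    simp [hE, and_comm]
  rw [hfin, Finset.sum_insert (by simp [he']), Finset.sum_erase_eq_sub (by simpa using he)]
  ring

lemma mstWeight_le_weightSum [Finite V] (w : Sym2 V → ℝ) (hT : T.IsSpanningTreeOf G) :
    mstWeight G w ≤ T.weightSum w :=
  csInf_le (toFinite _).bddBelow ⟨T, hT, rfl⟩

lemma IsTree.exists_isSpanningTreeOf_weightSum_lt [Finite V] {w : Sym2 V → ℝ} (hT : T.IsTree)
    (huv : T.Adj u v) (hc : (T.deleteEdges {s(u, v)}).Reachable c v) (hcu : c ≠ u) (hcv : c ≠ v)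
    (hw : w s(u, c) < w s(u, v)) :
    ∃ T' : SimpleGraph V, T'.IsSpanningTreeOf ⊤ ∧ T'.weightSum w < T.weightSum w := by
  have hT' := hT.deleteEdges_sup_edge huv hc hcu hcv
  refine ⟨_, ⟨le_top, hT'.connected, hT'.isAcyclic⟩, ?_⟩
  rw [weightSum_eq_of_edgeSet_eq_insert w huv
    (hT.isAcyclic.not_adj_of_reachable_deleteEdges huv hc hcv)
    (edgeSet_deleteEdges_sup_edge hcu.symm)]
  linarith

/-- The cycle property of minimal spanning trees, for a triangle `u q v`. -/
lemma IsSpanningTreeOf.not_adj_of_lt_of_lt [Finite V] {w : Sym2 V → ℝ} {q : V}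
    (hT : T.IsSpanningTreeOf ⊤) (hmin : T.weightSum w = mstWeight ⊤ w)
    (hu : w s(u, q) < w s(u, v)) (hv : w s(q, v) < w s(u, v)) : ¬ T.Adj u v := by
  intro huv
  obtain ⟨-, hconn, hacyc⟩ := hT
  have hT : T.IsTree := ⟨hconn, hacyc⟩
  have hqu : q ≠ u := by rintro rfl; exact lt_irrefl _ hv
  have hqv : q ≠ v := by rintro rfl; exact lt_irrefl _ hu
  obtain ⟨T', hT', hlt⟩ : ∃ T' : SimpleGraph V, T'.IsSpanningTreeOf ⊤ ∧
      T'.weightSum w < T.weightSum w := by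
    rcases (hconn q u).deleteEdges_or v with hq | hq
    · have hq' : (T.deleteEdges {s(v, u)}).Reachable q u := by rwa [Sym2.eq_swap]
      have hv' : w s(v, q) < w s(v, u) := by rwa [Sym2.eq_swap (a := v), Sym2.eq_swap (a := v)]
      exact hT.exists_isSpanningTreeOf_weightSum_lt huv.symm hq' hqv hqu hv'
    · exact hT.exists_isSpanningTreeOf_weightSum_lt huv hq hqu hqv hu
  exact (mstWeight_le_weightSum w hT').not_gt (hmin ▸ hlt)

end SimpleGraph

theorem wall_blocks_long_mst_edges_general
    {d : ℕ} (x : EuclideanSpace ℝ (Fin d)) (a b : ℝ) (hab : a < b)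
    (K : Set (EuclideanSpace ℝ (Fin d))) (hK : IsCube K)
    (ω : Finset (EuclideanSpace ℝ (Fin d))) (hω : (ω : Set (EuclideanSpace ℝ (Fin d))) ⊆ K)
    (hwall : ContainsWall (ω : Set (EuclideanSpace ℝ (Fin d))) K x a b)
    (T : SimpleGraph ((ω : Set (EuclideanSpace ℝ (Fin d)))))
    (hT : T.IsSpanningTreeOf (⊤ : SimpleGraph ((ω : Set (EuclideanSpace ℝ (Fin d))))))
    (hmin : T.weightSum (euclWeight (ω : Set (EuclideanSpace ℝ (Fin d)))) =
      euclMST (ω : Set (EuclideanSpace ℝ (Fin d)))) :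
    ∀ y₁ y₂ : (ω : Set (EuclideanSpace ℝ (Fin d))),
      (y₁ : EuclideanSpace ℝ (Fin d)) ∈ box x a →
      (y₂ : EuclideanSpace ℝ (Fin d)) ∉ box x b →
      ¬ T.Adj y₁ y₂ := by
  intro y₁ y₂ h₁ h₂ hadj
  obtain ⟨z, s, -, rfl⟩ := hK
  obtain ⟨q, hqω, hq₁, hq₂⟩ :=
    hwall.exists_mem_dist_lt convex_box hab (hω y₁.2) (hω y₂.2) h₁ h₂
  exact hT.not_adj_of_lt_of_lt (q := ⟨q, hqω⟩) hmin
    (by rwa [euclWeight_mk, euclWeight_mk]) (by rwa [euclWeight_mk, euclWeight_mk]) hadj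

/-- **Walls shield long MST edges** (Chatterjee–Sen, Lemma 6.1).  Let `b > a > 0`,
`x ∈ ℝ^d`, and let `K` be a cube containing `B(x,a)` with `K ∩ ∂B(x,b) ≠ ∅`.  If a
finite set `ω ⊆ K` contains a `K`-wall around `B(x,a)` in `B(x,b)`, then no edge of
the complete graph on `ω` (with Euclidean weights) with one endpoint in `B(x,a)` and
the other outside `B(x,b)` belongs to any minimal spanning tree of that graph. -/
theorem wall_blocks_long_mst_edges
    {d : ℕ} (x : EuclideanSpace ℝ (Fin d)) (a b : ℝ) (ha : 0 < a) (hab : a < b)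
    (K : Set (EuclideanSpace ℝ (Fin d))) (hK : IsCube K)
    (hBK : box x a ⊆ K) (hKb : (K ∩ frontier (box x b)).Nonempty)
    (ω : Finset (EuclideanSpace ℝ (Fin d))) (hω : (ω : Set (EuclideanSpace ℝ (Fin d))) ⊆ K)
    (hwall : ContainsWall (ω : Set (EuclideanSpace ℝ (Fin d))) K x a b)
    (T : SimpleGraph ((ω : Set (EuclideanSpace ℝ (Fin d)))))
    (hT : T.IsSpanningTreeOf (⊤ : SimpleGraph ((ω : Set (EuclideanSpace ℝ (Fin d))))))
    (hmin : T.weightSum (euclWeight (ω : Set (EuclideanSpace ℝ (Fin d)))) =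
      euclMST (ω : Set (EuclideanSpace ℝ (Fin d)))) :
    ∀ y₁ y₂ : (ω : Set (EuclideanSpace ℝ (Fin d))),
      (y₁ : EuclideanSpace ℝ (Fin d)) ∈ box x a →
      (y₂ : EuclideanSpace ℝ (Fin d)) ∉ box x b →
      ¬ T.Adj y₁ y₂ :=
  wall_blocks_long_mst_edges_general x a b hab K hK ω hω hwall T hT hmin
end

section
/- Let d ≥ 2, let x ∈ ℝ^d, let n be a positive integer, and let 𝒫 be a homogeneous Poisson point process of intensity one on ℝ^d. Then for any a₀ > 0 there exist constants c and c' depending only on a₀ and d such that for every 0 < a ≤ a₀ with B(x,a) ⊂ B(n), and every b with b > a and B(n) ∩ ∂B(x,b) ≠ ∅, P(𝒫 does not contain a B(n)-wall around B(x,a) in B(x,b)) ≤ c exp(−c' b^d). -/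
open MeasureTheory Metric Set

/-- `P` is a homogeneous Poisson point process with intensity `1` on `ℝ^d`. -/
def IsPoissonPP {d : ℕ} {Ω : Type*} [MeasurableSpace Ω] (Pr : Measure Ω)
    (P : Ω → Set (EuclideanSpace ℝ (Fin d))) : Prop :=
  (∀ ω, ∀ K : Set (EuclideanSpace ℝ (Fin d)), IsCompact K → (P ω ∩ K).Finite) ∧
  ∀ (n : ℕ) (A : Fin n → Set (EuclideanSpace ℝ (Fin d))),
    (∀ i, MeasurableSet (A i)) → Pairwise (Function.onFun Disjoint A) →
    ProbabilityTheory.iIndepFun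
      (fun i ω => (P ω ∩ A i).ncard) Pr ∧
    ∀ i, volume (A i) ≠ ⊤ → ∀ k : ℕ,
      Pr {ω | (P ω ∩ A i).ncard = k} =
        ENNReal.ofReal (Real.exp (-(volume (A i)).toReal) *
          (volume (A i)).toReal ^ k / (Nat.factorial k))

/-!
If the wall fails at `p₁ ∈ ∂B(x,a)`, `p₂ ∈ B(n) ∩ ∂B(x,b)`, then every point within sup-distance
`3r` of the midpoint of `x` and `p₂` lies in `B(x,b) \ B(x,a)` and in both Euclidean balls, as soon
as `(√d + 1)(12r + 7a) ≤ b`. Some cube of radius `r` from a grid of `(2⌈b/2r⌉ + 1)^d` cubes around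
`x`, clamped into `B(n)`, lies that close to the midpoint, so it contains no Poisson point.
With `r = b / (24(√d + 1))` the number of cubes does not depend on `b` and each is empty with
probability `exp(-(2r)^d) = exp(-c' b^d)`, so a union bound handles `b ≥ 14(√d + 1)a₀`; for
smaller `b` the constant `c` absorbs the trivial bound `1`.
-/
section Box

variable {d : ℕ}

theorem mem_box_self (x : EuclideanSpace ℝ (Fin d)) {r : ℝ} (hr : 0 ≤ r) : x ∈ box x r :=
  fun i => by simpa using hr

theorem midpoint_apply (x y : EuclideanSpace ℝ (Fin d)) (i : Fin d) :
    midpoint ℝ x y i = (x i + y i) / 2 := by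
  rw [midpoint_eq_smul_add]
  simp only [PiLp.smul_apply, PiLp.add_apply, smul_eq_mul, invOf_eq_inv]
  ring

theorem box_eq_preimage (c : EuclideanSpace ℝ (Fin d)) (r : ℝ) :
    box c r = (MeasurableEquiv.toLp 2 (Fin d → ℝ)).symm ⁻¹'
      Set.univ.pi fun i => Icc (c i - r) (c i + r) := by
  ext y
  simp only [box, mem_preimage, mem_univ_pi, mem_Icc,
    MeasurableEquiv.toLp_symm_apply, abs_sub_le_iff]
  exact forall_congr' fun i => by constructor <;> rintro ⟨h₁, h₂⟩ <;> constructor <;> linarith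

theorem measurableSet_box (c : EuclideanSpace ℝ (Fin d)) (r : ℝ) : MeasurableSet (box c r) := by
  rw [box_eq_preimage]
  exact (MeasurableEquiv.toLp 2 (Fin d → ℝ)).symm.measurable
    (MeasurableSet.univ_pi fun _ => measurableSet_Icc)

theorem volume_box (c : EuclideanSpace ℝ (Fin d)) (r : ℝ) :
    volume (box c r) = ENNReal.ofReal (2 * r) ^ d := by
  rw [box_eq_preimage,
    (EuclideanSpace.volume_preserving_symm_measurableEquiv_toLp (Fin d)).measure_preimage
      (MeasurableSet.univ_pi fun _ => measurableSet_Icc).nullMeasurableSet,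
    volume_pi_pi]
  simp only [Real.volume_Icc, add_sub_sub_cancel, ← two_mul, Finset.prod_const,
    Finset.card_univ, Fintype.card_fin]

theorem isClosed_box_s13 (c : EuclideanSpace ℝ (Fin d)) (r : ℝ) : IsClosed (box c r) := by
  simp only [box, ofPred_forall]
  exact isClosed_iInter fun i => isClosed_le (by fun_prop) continuous_const

theorem exists_le_abs_sub_of_mem_frontier_box {c p : EuclideanSpace ℝ (Fin d)} {r : ℝ}
    (hp : p ∈ frontier (box c r)) : ∃ i, r ≤ |p i - c i| := by
  by_contra! h
  have hopen : IsOpen {y : EuclideanSpace ℝ (Fin d) | ∀ i, |y i - c i| < r} := by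
    simp only [ofPred_forall]
    exact isOpen_iInter_of_finite fun i => isOpen_lt (by fun_prop) continuous_const
  exact hp.2 (interior_maximal (fun y hy i => (hy i).le) hopen h)

theorem dist_le_sqrt_mul_of_mem_box {u v : EuclideanSpace ℝ (Fin d)} {r : ℝ} (hr : 0 ≤ r)
    (h : u ∈ box v r) : dist u v ≤ √d * r := by
  rw [EuclideanSpace.dist_eq, ← Real.sqrt_sq hr, ← Real.sqrt_mul d.cast_nonneg]
  gcongr
  calc ∑ i, dist (u i) (v i) ^ 2 ≤ ∑ _i : Fin d, r ^ 2 := by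
        gcongr with i
        rw [Real.dist_eq]
        exact h i
    _ = d * r ^ 2 := by simp

end Box

theorem abs_max_min_sub_le {n r g m : ℝ} (hm : |m| ≤ n) (hgm : |g - m| ≤ r / 2) :
    |max (r - n) (min (n - r) g) - m| ≤ 3 * r / 2 := by
  rw [abs_le] at *
  rcases le_total g (n - r) with h | h
  · rw [min_eq_right h]
    rcases le_total (r - n) g with h' | h'
    · rw [max_eq_right h']; constructor <;> linarith
    · rw [max_eq_left h']; constructor <;> linarith
  · rw [min_eq_left h]
    rcases le_total (r - n) (n - r) with h' | h'
    · rw [max_eq_right h']; constructor <;> linarith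
    · rw [max_eq_left h']; constructor <;> linarith

theorem abs_round_le_of_abs_le {t : ℝ} {N : ℤ} (h : |t| ≤ N) : |round t| ≤ N := by
  have : |(round t : ℝ)| < N + 1 := by
    have := abs_sub_abs_le_abs_sub (round t : ℝ) t
    rw [abs_sub_comm (round t : ℝ)] at this
    linarith [abs_sub_round t]
  exact Int.lt_add_one_iff.1 (by exact_mod_cast this)

section Grid

variable {d : ℕ}

/-- Centres are clamped coordinatewise to `[r - n, n - r]`, so that the cube stays inside
`box 0 n`. -/
def gridBox (x : EuclideanSpace ℝ (Fin d)) (r n : ℝ) (k : Fin d → ℤ) :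
    Set (EuclideanSpace ℝ (Fin d)) :=
  box (WithLp.toLp 2 fun i => max (r - n) (min (n - r) (x i + r * k i))) r

theorem gridBox_subset_box {x : EuclideanSpace ℝ (Fin d)} {r n : ℝ} (hrn : r ≤ n)
    (k : Fin d → ℤ) : gridBox x r n k ⊆ box 0 n := by
  intro y hy i
  have hc : |max (r - n) (min (n - r) (x i + r * k i))| ≤ n - r :=
    abs_le.2 ⟨neg_sub n r ▸ le_max_left _ _, max_le (by linarith) (min_le_left _ _)⟩
  have := abs_sub_abs_le_abs_sub (y i) (max (r - n) (min (n - r) (x i + r * k i)))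
  have := hy i
  simp only [PiLp.zero_apply, sub_zero] at this ⊢
  linarith

theorem card_Icc_neg_natCast (N : ℕ) :
    (Finset.Icc (-(N : Fin d → ℤ)) N).card = (2 * N + 1) ^ d := by
  simp only [Pi.card_Icc, Pi.neg_apply, Pi.natCast_apply, Int.card_Icc, Finset.prod_const,
    Finset.card_univ, Fintype.card_fin]
  congr 1
  omega

theorem exists_mem_Icc_gridBox_subset {x m : EuclideanSpace ℝ (Fin d)} {r n R : ℝ} (hr : 0 < r)
    (hm : m ∈ box 0 n) (hmx : m ∈ box x R) :
    ∃ k ∈ Finset.Icc (-(⌈R / r⌉₊ : Fin d → ℤ)) ⌈R / r⌉₊, gridBox x r n k ⊆ box m (3 * r) := by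
  set t : Fin d → ℝ := fun i => (m i - x i) / r
  have ht : ∀ i, |t i| ≤ (⌈R / r⌉₊ : ℤ) := fun i =>
    calc |t i| = |m i - x i| / r := by rw [abs_div, abs_of_pos hr]
      _ ≤ R / r := by gcongr; exact hmx i
      _ ≤ ⌈R / r⌉₊ := Nat.le_ceil _
  refine ⟨fun i => round (t i), Finset.mem_Icc.2 ⟨fun i => ?_, fun i => ?_⟩, fun y hy i => ?_⟩
  · exact (abs_le.1 (abs_round_le_of_abs_le (ht i))).1
  · exact (abs_le.1 (abs_round_le_of_abs_le (ht i))).2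
  · have hgrid : |x i + r * round (t i) - m i| ≤ r / 2 := by
      have : x i + r * round (t i) - m i = r * (round (t i) - t i) := by
        simp only [t]; field_simp; ring
      rw [this, abs_mul, abs_of_pos hr, abs_sub_comm]
      linarith [mul_le_mul_of_nonneg_left (abs_sub_round (t i)) hr.le]
    have hmi : |m i| ≤ n := by simpa using hm i
    have hyc : |y i - max (r - n) (min (n - r) (x i + r * round (t i)))| ≤ r := hy i
    have := abs_max_min_sub_le hmi hgrid
    have := abs_sub_le (y i) (max (r - n) (min (n - r) (x i + r * round (t i)))) (m i)
    linarith

end Grid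

section Wall

variable {d : ℕ}

theorem mem_box_diff_of_mem_box_midpoint {x p y : EuclideanSpace ℝ (Fin d)} {a b s : ℝ}
    (hp : p ∈ box x b) {i : Fin d} (hi : b ≤ |p i - x i|) (hy : y ∈ box (midpoint ℝ x p) s)
    (ha : 0 ≤ a) (h : s + a < b / 2) : y ∈ box x b \ box x a := by
  have hmx : ∀ j, |midpoint ℝ x p j - x j| = |p j - x j| / 2 := fun j => by
    rw [midpoint_apply, show (x j + p j) / 2 - x j = (p j - x j) / 2 by ring, abs_div, abs_two]
  refine ⟨fun j => ?_, fun hya => ?_⟩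
  · have := abs_sub_le (y j) (midpoint ℝ x p j) (x j)
    linarith [hy j, hmx j, hp j]
  · have := abs_sub_le (midpoint ℝ x p i) (y i) (x i)
    rw [abs_sub_comm (midpoint ℝ x p i) (y i)] at this
    linarith [hy i, hmx i, hya i]

theorem mem_closedBall_of_mem_box_midpoint {x p₁ p₂ y : EuclideanSpace ℝ (Fin d)} {a s : ℝ}
    (ha : 0 ≤ a) (hs : 0 ≤ s) (hp₁ : p₁ ∈ box x a) (hy : y ∈ box (midpoint ℝ x p₂) s)
    (h : √d * (4 * s + 7 * a) ≤ dist x p₂) :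
    y ∈ closedBall p₁ (3 * dist p₁ p₂ / 4) ∩ closedBall p₂ (3 * dist p₁ p₂ / 4) := by
  have hy' := dist_le_sqrt_mul_of_mem_box hs hy
  have hp₁' := dist_le_sqrt_mul_of_mem_box ha hp₁
  have hm₁ : dist (midpoint ℝ x p₂) x = dist x p₂ / 2 := by
    rw [dist_comm, dist_left_midpoint, Real.norm_two]; ring
  have hm₂ : dist (midpoint ℝ x p₂) p₂ = dist x p₂ / 2 := by
    rw [dist_midpoint_right, Real.norm_two]; ring
  have h₁₂ := dist_triangle x p₁ p₂
  have := mul_nonneg (Real.sqrt_nonneg d) ha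
  rw [dist_comm p₁ x] at hp₁'
  constructor <;> rw [mem_closedBall]
  · calc dist y p₁ ≤ dist y (midpoint ℝ x p₂) + dist (midpoint ℝ x p₂) x + dist x p₁ :=
          dist_triangle4 _ _ _ _
      _ ≤ 3 * dist p₁ p₂ / 4 := by linarith
  · calc dist y p₂ ≤ dist y (midpoint ℝ x p₂) + dist (midpoint ℝ x p₂) p₂ := dist_triangle _ _ _
      _ ≤ 3 * dist p₁ p₂ / 4 := by linarith

theorem exists_gridBox_disjoint_of_not_containsWall {W : Set (EuclideanSpace ℝ (Fin d))}
    {x : EuclideanSpace ℝ (Fin d)} {n a b r : ℝ} (hr : 0 < r) (ha : 0 ≤ a)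
    (hb : (√d + 1) * (12 * r + 7 * a) ≤ b) (hx : x ∈ box 0 n)
    (h : ¬ ContainsWall W (box 0 n) x a b) :
    ∃ k ∈ Finset.Icc (-(⌈b / 2 / r⌉₊ : Fin d → ℤ)) ⌈b / 2 / r⌉₊, W ∩ gridBox x r n k = ∅ := by
  simp only [ContainsWall, not_forall, not_nonempty_iff_eq_empty] at h
  obtain ⟨p₁, hp₁, p₂, ⟨hp₂n, hp₂⟩, hempty⟩ := h
  have hp₁a : p₁ ∈ box x a := frontier_subset_iff_isClosed.2 (isClosed_box_s13 x a) hp₁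
  have hp₂b : p₂ ∈ box x b := frontier_subset_iff_isClosed.2 (isClosed_box_s13 x b) hp₂
  obtain ⟨i, hi⟩ := exists_le_abs_sub_of_mem_frontier_box hp₂
  set m := midpoint ℝ x p₂
  have hmn : m ∈ box 0 n := fun j => by
    have hxj : |x j| ≤ n := by simpa using hx j
    have hp₂j : |p₂ j| ≤ n := by simpa using hp₂n j
    have := abs_add_le (x j) (p₂ j)
    simp only [PiLp.zero_apply, sub_zero, m, midpoint_apply, abs_div, abs_two]
    linarith
  have hmx : m ∈ box x (b / 2) := fun j => by
    rw [midpoint_apply, show (x j + p₂ j) / 2 - x j = (p₂ j - x j) / 2 by ring, abs_div, abs_two]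
    linarith [hp₂b j]
  obtain ⟨k, hk, hkm⟩ := exists_mem_Icc_gridBox_subset (n := n) hr hmn hmx
  refine ⟨k, hk, eq_empty_of_forall_notMem fun y ⟨hyW, hyk⟩ => ?_⟩
  have hsqrt := mul_nonneg (Real.sqrt_nonneg d) (by linarith : 0 ≤ 12 * r + 7 * a)
  have hdist : b ≤ dist x p₂ := hi.trans <| by
    rw [abs_sub_comm, ← Real.dist_eq]; exact PiLp.dist_apply_le x p₂ i
  have hyring := mem_box_diff_of_mem_box_midpoint hp₂b hi (hkm hyk) ha (by linarith)
  have hyball := mem_closedBall_of_mem_box_midpoint ha (by linarith) hp₁a (hkm hyk)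
    (by linarith)
  have hrn : r ≤ n := by
    have hxi : |x i| ≤ n := by simpa using hx i
    have hp₂i : |p₂ i| ≤ n := by simpa using hp₂n i
    linarith [abs_sub (p₂ i) (x i)]
  exact eq_empty_iff_forall_notMem.1 hempty y
    ⟨⟨⟨⟨gridBox_subset_box hrn k hyk, hyW⟩, hyball.1⟩, hyball.2⟩, hyring⟩

end Wall

section Poisson

variable {d : ℕ} {Ω : Type*} [MeasurableSpace Ω] {Pr : Measure Ω}
  {P : Ω → Set (EuclideanSpace ℝ (Fin d))}

theorem IsPoissonPP.measure_ncard_inter_eq_zero (hP : IsPoissonPP Pr P)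
    {A : Set (EuclideanSpace ℝ (Fin d))} (hA : MeasurableSet A) (hA' : volume A ≠ ⊤) :
    Pr {ω | (P ω ∩ A).ncard = 0} = ENNReal.ofReal (Real.exp (-(volume A).toReal)) := by
  simpa using (hP.2 1 (fun _ => A) (fun _ => hA) Subsingleton.pairwise).2 0 hA' 0

theorem IsPoissonPP.measure_not_containsWall_le (hP : IsPoissonPP Pr P)
    {x : EuclideanSpace ℝ (Fin d)} {n a b r : ℝ} (hr : 0 < r) (ha : 0 ≤ a)
    (hb : (√d + 1) * (12 * r + 7 * a) ≤ b) (hx : x ∈ box 0 n) :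
    Pr {ω | ¬ ContainsWall (P ω) (box 0 n) x a b} ≤
      ENNReal.ofReal ((2 * ⌈b / 2 / r⌉₊ + 1) ^ d * Real.exp (-(2 * r) ^ d)) := by
  set I := Finset.Icc (-(⌈b / 2 / r⌉₊ : Fin d → ℤ)) ⌈b / 2 / r⌉₊
  have hempty (k : Fin d → ℤ) : Pr {ω | (P ω ∩ gridBox x r n k).ncard = 0} =
      ENNReal.ofReal (Real.exp (-(2 * r) ^ d)) := by
    rw [gridBox, hP.measure_ncard_inter_eq_zero (measurableSet_box _ _)
        (by rw [volume_box]; exact ENNReal.pow_ne_top ENNReal.ofReal_ne_top),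
      volume_box, ← ENNReal.ofReal_pow (by positivity), ENNReal.toReal_ofReal (by positivity)]
  calc Pr {ω | ¬ ContainsWall (P ω) (box 0 n) x a b}
      ≤ Pr (⋃ k ∈ I, {ω | (P ω ∩ gridBox x r n k).ncard = 0}) := measure_mono fun ω hω => by
        obtain ⟨k, hk, hk'⟩ := exists_gridBox_disjoint_of_not_containsWall hr ha hb hx hω
        exact mem_biUnion hk (by simp [hk'])
    _ ≤ ∑ k ∈ I, Pr {ω | (P ω ∩ gridBox x r n k).ncard = 0} := measure_biUnion_finset_le _ _
    _ = ENNReal.ofReal ((2 * ⌈b / 2 / r⌉₊ + 1) ^ d * Real.exp (-(2 * r) ^ d)) := by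
      rw [Finset.sum_congr rfl fun k _ => hempty k, Finset.sum_const, card_Icc_neg_natCast,
        nsmul_eq_mul, ENNReal.ofReal_mul (by positivity)]
      norm_cast

end Poisson

theorem wall_exists_whp_general
    {d : ℕ}
    {Ω : Type*} [MeasurableSpace Ω] (Pr : Measure Ω) [IsProbabilityMeasure Pr]
    (P : Ω → Set (EuclideanSpace ℝ (Fin d))) (hP : IsPoissonPP Pr P)
    (a₀ : ℝ) :
    ∃ c c' : ℝ, 0 < c ∧ 0 < c' ∧
      ∀ (n : ℕ), 0 < n → ∀ (x : EuclideanSpace ℝ (Fin d)) (a : ℝ),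
        0 < a → a ≤ a₀ → box x a ⊆ box 0 (n : ℝ) →
      ∀ b : ℝ, a < b → (box 0 (n : ℝ) ∩ frontier (box x b)).Nonempty →
        Pr {ω | ¬ ContainsWall (P ω) (box 0 (n : ℝ)) x a b} ≤
          ENNReal.ofReal (c * Real.exp (-c' * b ^ d)) := by
  set σ := √d + 1
  have hσ : 0 < σ := by positivity
  set c' := (12 * σ)⁻¹ ^ d
  set B₀ := 14 * σ * a₀
  set c := max ((2 * ⌈12 * σ⌉₊ + 1) ^ d : ℝ) (Real.exp (c' * B₀ ^ d))
  refine ⟨c, c', lt_max_of_lt_right (Real.exp_pos _), by positivity, ?_⟩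
  intro n _ x a ha haa₀ hxa b hab _
  rcases le_or_gt b B₀ with hb | hb
  · refine prob_le_one.trans (ENNReal.one_le_ofReal.2 ?_)
    calc 1 ≤ Real.exp (c' * B₀ ^ d) * Real.exp (-c' * b ^ d) := by
          rw [← Real.exp_add, Real.one_le_exp_iff, neg_mul, ← sub_eq_add_neg, sub_nonneg]
          gcongr
          linarith
      _ ≤ c * Real.exp (-c' * b ^ d) := by gcongr; exact le_max_right _ _
  · have hb0 : 0 < b := ha.trans hab
    set r := b / (24 * σ) with hr_def
    have hr : 0 < r := by positivity
    have hbr : σ * (12 * r + 7 * a) ≤ b :=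
      calc σ * (12 * r + 7 * a) = b / 2 + 7 * σ * a := by rw [hr_def]; field_simp; ring
        _ ≤ b / 2 + 7 * σ * a₀ := by gcongr
        _ ≤ b := by linarith
    refine (hP.measure_not_containsWall_le hr ha.le hbr (hxa (mem_box_self x ha.le))).trans
      (ENNReal.ofReal_le_ofReal ?_)
    rw [show b / 2 / r = 12 * σ by rw [hr_def]; field_simp; ring,
      show (2 * r) ^ d = c' * b ^ d by rw [← mul_pow, hr_def]; congr 1; field_simp; ring,
      ← neg_mul]
    gcongr
    exact le_max_left _ _

/-- **Existence of walls with high probability** (Chatterjee–Sen, Lemma 6.3).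
Let `d ≥ 2` and let `P` be a rate-one Poisson process on `ℝ^d`.  For any `a₀ > 0`
there are constants `c, c' > 0` depending only on `a₀` and `d` such that for every
positive integer `n`, every `x`, every `0 < a ≤ a₀` with `B(x,a) ⊆ B(n)`, and every
`b > a` with `B(n) ∩ ∂B(x,b) ≠ ∅`,
`P(P contains no B(n)-wall around B(x,a) in B(x,b)) ≤ c exp(-c' b^d)`. -/
theorem wall_exists_whp
    {d : ℕ} (hd : 2 ≤ d)
    {Ω : Type*} [MeasurableSpace Ω] (Pr : Measure Ω) [IsProbabilityMeasure Pr]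
    (P : Ω → Set (EuclideanSpace ℝ (Fin d))) (hP : IsPoissonPP Pr P)
    (a₀ : ℝ) (ha₀ : 0 < a₀) :
    ∃ c c' : ℝ, 0 < c ∧ 0 < c' ∧
      ∀ (n : ℕ), 0 < n → ∀ (x : EuclideanSpace ℝ (Fin d)) (a : ℝ),
        0 < a → a ≤ a₀ → box x a ⊆ box 0 (n : ℝ) →
      ∀ b : ℝ, a < b → (box 0 (n : ℝ) ∩ frontier (box x b)).Nonempty →
        Pr {ω | ¬ ContainsWall (P ω) (box 0 (n : ℝ)) x a b} ≤
          ENNReal.ofReal (c * Real.exp (-c' * b ^ d)) :=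
  wall_exists_whp_general Pr P hP a₀
end

section
/- Let X₁,…,X_n be independent random variables defined on a probability space (Ω,𝒜,P) taking values in a measurable space (𝒳,𝒮), and let f : 𝒳ⁿ → ℝ be a bounded measurable function. Then for any pairwise disjoint subsets A₁,…,A_k of {1,…,n}, Var(f(X₁,…,X_n)) ≥ Σ_{i=1}^k Var(E[f(X₁,…,X_n) | {X_j}_{j∈A_i}]). -/
/-!
Write `Zᵢ = E[Y | 𝓕ᵢ]` with `𝓕ᵢ = σ(X_j : j ∈ Aᵢ)`. Pulling out the `𝓕ᵢ`-measurable factor gives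
`cov(Y, Zᵢ) = Var Zᵢ`. Disjoint blocks of independent variables generate independent σ-algebras,
so the `Zᵢ` are pairwise independent and `Var (∑ Zᵢ) = ∑ Var Zᵢ`. Expanding
`0 ≤ Var (Y - ∑ Zᵢ)` therefore leaves `Var Y - ∑ Var Zᵢ`: this is Bessel's inequality.
-/

open MeasureTheory ProbabilityTheory

section ConditionalVariance

variable {Ω : Type*} {mΩ : MeasurableSpace Ω} {μ : Measure Ω}

lemma ProbabilityTheory.Indep.indepFun_of_measurable {β γ : Type*} [MeasurableSpace β]
    [MeasurableSpace γ] {m₁ m₂ : MeasurableSpace Ω} {f : Ω → β} {g : Ω → γ}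
    (h : Indep m₁ m₂ μ) (hf : Measurable[m₁] f) (hg : Measurable[m₂] g) : IndepFun f g μ :=
  (IndepFun_iff_Indep f g μ).2 <|
    indep_of_indep_of_le_left (indep_of_indep_of_le_right h hg.comap_le) hf.comap_le

variable [IsProbabilityMeasure μ] {Y : Ω → ℝ}

lemma covariance_condExp_left {m : MeasurableSpace Ω} (hm : m ≤ mΩ) (hY : MemLp Y 2 μ) :
    cov[μ[Y | m], Y; μ] = Var[μ[Y | m]; μ] := by
  have hZ : MemLp (μ[Y | m]) 2 μ := hY.condExp one_le_two
  have h_pull_out : μ[μ[Y | m] * Y | m] =ᵐ[μ] μ[Y | m] * μ[Y | m] :=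
    condExp_mul_of_stronglyMeasurable_left stronglyMeasurable_condExp
      (hZ.integrable_mul hY) (hY.integrable one_le_two)
  rw [← covariance_self hZ.aemeasurable, covariance_eq_sub hZ hY, covariance_eq_sub hZ hZ,
    ← integral_condExp hm, integral_congr_ae h_pull_out, integral_condExp hm]

theorem sum_variance_condExp_le_variance {ι : Type*} [Fintype ι] {m : ι → MeasurableSpace Ω}
    (hm : ∀ i, m i ≤ mΩ) (hindep : Pairwise fun i j ↦ Indep (m i) (m j) μ)
    (hY : MemLp Y 2 μ) :
    ∑ i, Var[μ[Y | m i]; μ] ≤ Var[Y; μ] := by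
  have hZ : ∀ i, MemLp (μ[Y | m i]) 2 μ := fun i ↦ hY.condExp one_le_two
  have hcov : cov[Y, ∑ i, μ[Y | m i]; μ] = ∑ i, Var[μ[Y | m i]; μ] := by
    rw [covariance_sum_right hZ hY]
    exact Finset.sum_congr rfl fun i _ ↦ by
      rw [covariance_comm, covariance_condExp_left (hm i) hY]
  have hvar : Var[∑ i, μ[Y | m i]; μ] = ∑ i, Var[μ[Y | m i]; μ] :=
    IndepFun.variance_sum (fun i _ ↦ hZ i) fun i _ j _ hij ↦
      (hindep hij).indepFun_of_measurable stronglyMeasurable_condExp.measurable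
        stronglyMeasurable_condExp.measurable
  have h_nonneg := variance_nonneg (Y - ∑ i, μ[Y | m i]) μ
  rw [variance_sub hY (memLp_finsetSum' _ fun i _ ↦ hZ i), hcov, hvar] at h_nonneg
  linarith

end ConditionalVariance

section Blocks

variable {Ω ι 𝒳 : Type*} {mΩ : MeasurableSpace Ω} [MeasurableSpace 𝒳]

lemma MeasurableSpace.comap_subtype_tuple_eq_biSup (X : ι → Ω → 𝒳) (S : Set ι) :
    MeasurableSpace.comap (fun ω (j : S) ↦ X j ω) inferInstance
      = ⨆ j ∈ S, MeasurableSpace.comap (X j) inferInstance := by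
  simp_rw [MeasurableSpace.pi, MeasurableSpace.comap_iSup, MeasurableSpace.comap_comp,
    Function.comp_def]
  exact iSup_subtype'' S fun j ↦ MeasurableSpace.comap (X j) inferInstance

lemma ProbabilityTheory.iIndepFun.indepFun_set {μ : Measure Ω} {X : ι → Ω → 𝒳}
    (h : iIndepFun X μ) (hX : ∀ i, Measurable (X i)) {S T : Set ι} (hST : Disjoint S T) :
    IndepFun (fun ω (j : S) ↦ X j ω) (fun ω (j : T) ↦ X j ω) μ := by
  rw [IndepFun_iff_Indep, MeasurableSpace.comap_subtype_tuple_eq_biSup,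
    MeasurableSpace.comap_subtype_tuple_eq_biSup]
  exact indep_iSup_of_disjoint (fun j ↦ (hX j).comap_le) h.iIndep hST

end Blocks

/-- **Sub-additivity of the variance over conditional expectations on disjoint blocks
of independent variables** (Chatterjee–Sen, Lemma 7.1).  If `X₁,…,Xₙ` are independent
random variables and `f` is bounded measurable, then for pairwise disjoint subsets
`A₁,…,A_k` of the index set,
`Var(f(X₁,…,Xₙ)) ≥ ∑ᵢ Var(E[f(X₁,…,Xₙ) | {X_j}_{j∈Aᵢ}])`. -/
theorem variance_ge_sum_conditional_variances
    {Ω : Type*} [MeasurableSpace Ω] (Pr : Measure Ω) [IsProbabilityMeasure Pr]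
    {𝒳 : Type*} [MeasurableSpace 𝒳] {n : ℕ}
    (X : Fin n → Ω → 𝒳) (hXm : ∀ i, Measurable (X i))
    (hindep : iIndepFun X Pr)
    (f : (Fin n → 𝒳) → ℝ) (hf : Measurable f)
    (hbdd : ∃ B : ℝ, ∀ v, |f v| ≤ B)
    {k : ℕ} (A : Fin k → Set (Fin n))
    (hdisj : Pairwise (Function.onFun Disjoint A)) :
    ∑ i : Fin k,
        variance
          (Pr[(fun ω => f (fun j => X j ω)) |
            MeasurableSpace.comap (fun ω (j : A i) => X (j : Fin n) ω) inferInstance])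
          Pr ≤
      variance (fun ω => f (fun j => X j ω)) Pr := by
  obtain ⟨B, hB⟩ := hbdd
  have hY : MemLp (fun ω ↦ f fun j ↦ X j ω) 2 Pr :=
    MemLp.of_bound (hf.comp (measurable_pi_lambda _ hXm)).aestronglyMeasurable B
      (ae_of_all _ fun ω ↦ (Real.norm_eq_abs _).trans_le (hB _))
  exact sum_variance_condExp_le_variance
    (fun i ↦ (measurable_pi_lambda (fun ω (j : A i) ↦ X j ω) fun j ↦ hXm j).comap_le)
    (fun i l hil ↦ (IndepFun_iff_Indep _ _ _).1 (hindep.indepFun_set hXm (hdisj hil))) hY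
end

section
/- Let S be a set and let R be a finite nonempty subset of S. Suppose there is a positive integer k such that: (I) for every r ∈ R there exist an integer m_r ≥ 3 and pairwise disjoint subsets C_r^{(1)},…,C_r^{(m_r)} of S satisfying r ∉ C_r^{(i)} and |C_r^{(i)}| ≥ k for all i ≤ m_r; and (II) for all distinct r, r' ∈ R, either (IIa) (⋃_{j≤m_r} C_r^{(j)} ∪ {r}) ∩ (⋃_{i≤m_{r'}} C_{r'}^{(i)} ∪ {r'}) = ∅, or (IIb) there exist i₀ ≤ m_{r'} and j₀ ≤ m_r such that (⋃_{j≤m_r} C_r^{(j)} ∪ {r}) \ C_r^{(j₀)} ⊆ C_{r'}^{(i₀)} and (⋃_{i≤m_{r'}} C_{r'}^{(i)} ∪ {r'}) \ C_{r'}^{(i₀)} ⊆ C_r^{(j₀)}. Then |S| ≥ k|R|. -/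
/-!
Induct on `|R|`. Choose a branch `X = C r j` of minimal cardinality among all branches of all
points of `R`. Minimality forces `X` to contain no point of `R`: if `r' ∈ X`, condition (II)
puts a whole branch of `r'` into `X \ {r'}`. Removing `r` from `R`, and `X` from `S` and from
every branch, keeps (I) and (II): by (II) a branch of `r' ≠ r` either misses `X` or contains a
branch of `r` different from `X`, so it keeps at least `k` points. As `|X| ≥ k`, the induction
closes.
-/

open Set

namespace BurtonKeane

variable {α : Type*} {m : α → ℕ} {C : α → ℕ → Set α}

def star (m : α → ℕ) (C : α → ℕ → Set α) (r : α) : Set α := (⋃ j < m r, C r j) ∪ {r}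

lemma branch_subset_star {r : α} {j : ℕ} (hj : j < m r) : C r j ⊆ star m C r :=
  fun _ hx => Or.inl (mem_biUnion hj hx)

lemma self_mem_star (r : α) : r ∈ star m C r := Or.inr rfl

lemma star_sdiff {X : Set α} {r : α} (hr : r ∉ X) :
    star m (fun r i => C r i \ X) r = star m C r \ X := by
  ext x
  by_cases hx : x = r
  · simp [star, hx, hr]
  · simp only [star, union_singleton, mem_insert_iff, hx, mem_iUnion, mem_sdiff, exists_and_left,
      exists_prop, false_or]
    tauto

lemma branch_subset_of_star_sdiff_subset {r : α} {j j₀ : ℕ} {T : Set α}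
    (h : star m C r \ C r j₀ ⊆ T) (hj : j < m r) (hdisj : Disjoint (C r j) (C r j₀)) :
    C r j ⊆ T :=
  fun _ hx => h ⟨branch_subset_star hj hx, hdisj.notMem_of_mem_left hx⟩

lemma self_mem_of_star_sdiff_subset {r : α} {j₀ : ℕ} {T : Set α}
    (h : star m C r \ C r j₀ ⊆ T) (hr : r ∉ C r j₀) : r ∈ T :=
  h ⟨self_mem_star r, hr⟩

lemma sdiff_sdiff_sdiff_subset {A B T X : Set α} (h : A \ B ⊆ T) : (A \ X) \ (B \ X) ⊆ T \ X :=
  fun _ ⟨⟨hA, hX⟩, hB⟩ => ⟨h ⟨hA, fun hB' => hB ⟨hB', hX⟩⟩, hX⟩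

lemma exists_lt_ne_ne {n : ℕ} (hn : 3 ≤ n) (a b : ℕ) : ∃ c < n, c ≠ a ∧ c ≠ b := by
  by_cases h₀ : 0 ≠ a ∧ 0 ≠ b
  · exact ⟨0, by omega, h₀⟩
  by_cases h₁ : 1 ≠ a ∧ 1 ≠ b
  · exact ⟨1, by omega, h₁⟩
  exact ⟨2, by omega, by omega, by omega⟩

lemma exists_branch_encard_le {R : Set α} (hR : ∃ r ∈ R, 0 < m r) :
    ∃ r ∈ R, ∃ j < m r, ∀ r' ∈ R, ∀ i < m r', (C r j).encard ≤ (C r' i).encard := by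
  obtain ⟨r₀, hr₀, hm₀⟩ := hR
  obtain ⟨⟨r, j⟩, ⟨hr, hj⟩, hmin⟩ :=
    (InvImage.wf (fun p : α × ℕ => (C p.1 p.2).encard) wellFounded_lt).has_min
      {p | p.1 ∈ R ∧ p.2 < m p.1} ⟨(r₀, 0), hr₀, hm₀⟩
  exact ⟨r, hr, j, hj, fun r' hr' i hi => not_lt.1 (hmin (r', i) ⟨hr', hi⟩)⟩

/-- Conditions (I) and (II), with `C r 0, …, C r (m r - 1)` the branches at `r`. -/
structure IsBranchSystem (S R : Set α) (k : ℕ) (m : α → ℕ) (C : α → ℕ → Set α) : Prop where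
  subset : R ⊆ S
  three_le : ∀ r ∈ R, 3 ≤ m r
  not_mem_branch : ∀ r ∈ R, ∀ i < m r, r ∉ C r i
  branch_subset : ∀ r ∈ R, ∀ i < m r, C r i ⊆ S
  le_encard_branch : ∀ r ∈ R, ∀ i < m r, (k : ℕ∞) ≤ (C r i).encard
  disjoint_branch : ∀ r ∈ R, ∀ i < m r, ∀ j < m r, i ≠ j → Disjoint (C r i) (C r j)
  disjoint_or_nested : ∀ r ∈ R, ∀ r' ∈ R, r ≠ r' →
    Disjoint (star m C r) (star m C r') ∨
    ∃ i₀ < m r', ∃ j₀ < m r, star m C r \ C r j₀ ⊆ C r' i₀ ∧ star m C r' \ C r' i₀ ⊆ C r j₀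

namespace IsBranchSystem

variable {S R : Set α} {k : ℕ} (h : IsBranchSystem S R k m C)
include h

theorem le_encard_branch_sdiff {r r' : α} (hr : r ∈ R) (hr' : r' ∈ R) (hne : r ≠ r')
    {j : ℕ} (hj : j < m r) (hr'j : r' ∉ C r j) {i : ℕ} (hi : i < m r') :
    (k : ℕ∞) ≤ (C r' i \ C r j).encard := by
  rcases h.disjoint_or_nested r hr r' hr' hne with hd | ⟨i₀, hi₀, j₀, hj₀, hrr', hr'r⟩
  · rw [(hd.mono (branch_subset_star hj) (branch_subset_star hi)).symm.sdiff_eq_left]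
    exact h.le_encard_branch r' hr' i hi
  have hr'j₀ : r' ∈ C r j₀ := self_mem_of_star_sdiff_subset hr'r (h.not_mem_branch r' hr' i₀ hi₀)
  have hj₀j : j₀ ≠ j := by
    rintro rfl
    exact hr'j hr'j₀
  by_cases hii₀ : i = i₀
  · -- the branch `C r' i₀` contains every branch of `r` except `C r j₀`, and there are three
    subst hii₀
    obtain ⟨l, hl, hlj₀, hlj⟩ := exists_lt_ne_ne (h.three_le r hr) j₀ j
    have hsub : C r l ⊆ C r' i \ C r j := fun x hx =>
      ⟨branch_subset_of_star_sdiff_subset hrr' hl (h.disjoint_branch r hr l hl j₀ hj₀ hlj₀) hx,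
        (h.disjoint_branch r hr l hl j hj hlj).notMem_of_mem_left hx⟩
    exact (h.le_encard_branch r hr l hl).trans (encard_le_encard hsub)
  · have hsub : C r' i ⊆ C r j₀ :=
      branch_subset_of_star_sdiff_subset hr'r hi (h.disjoint_branch r' hr' i hi i₀ hi₀ hii₀)
    rw [((h.disjoint_branch r hr j₀ hj₀ j hj hj₀j).mono_left hsub).sdiff_eq_left]
    exact h.le_encard_branch r' hr' i hi

theorem not_mem_branch_of_forall_encard_le {r : α} (hr : r ∈ R) {j : ℕ} (hj : j < m r)
    (hfin : (C r j).Finite) (hmin : ∀ r' ∈ R, ∀ i < m r', (C r j).encard ≤ (C r' i).encard)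
    {r' : α} (hr' : r' ∈ R) : r' ∉ C r j := by
  intro hr'j
  have hne : r ≠ r' := by
    rintro rfl
    exact h.not_mem_branch r hr j hj hr'j
  rcases h.disjoint_or_nested r hr r' hr' hne with hd | ⟨i₀, hi₀, j₀, hj₀, -, hr'r⟩
  · exact hd.notMem_of_mem_left (branch_subset_star hj hr'j) (self_mem_star r')
  have hr'j₀ : r' ∈ C r j₀ := self_mem_of_star_sdiff_subset hr'r (h.not_mem_branch r' hr' i₀ hi₀)
  obtain rfl : j₀ = j := by
    by_contra hj₀j
    exact (h.disjoint_branch r hr j₀ hj₀ j hj hj₀j).notMem_of_mem_left hr'j₀ hr'j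
  obtain ⟨i, hi, hii₀, -⟩ := exists_lt_ne_ne (h.three_le r' hr') i₀ i₀
  have hsub : C r' i ⊆ C r j₀ :=
    branch_subset_of_star_sdiff_subset hr'r hi (h.disjoint_branch r' hr' i hi i₀ hi₀ hii₀)
  have hssub : C r' i ⊂ C r j₀ :=
    (ssubset_iff_of_subset hsub).2 ⟨r', hr'j, h.not_mem_branch r' hr' i hi⟩
  exact (hfin.subset hsub).encard_lt_encard hssub |>.not_ge (hmin r' hr' i hi)

theorem sdiff {R' X : Set α} (hR' : R' ⊆ R) (hX : ∀ r ∈ R', r ∉ X)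
    (hk : ∀ r ∈ R', ∀ i < m r, (k : ℕ∞) ≤ (C r i \ X).encard) :
    IsBranchSystem (S \ X) R' k m (fun r i => C r i \ X) where
  subset r hr := ⟨h.subset (hR' hr), hX r hr⟩
  three_le r hr := h.three_le r (hR' hr)
  not_mem_branch r hr i hi hri := h.not_mem_branch r (hR' hr) i hi hri.1
  branch_subset r hr i hi := sdiff_subset_sdiff_left (h.branch_subset r (hR' hr) i hi)
  le_encard_branch := hk
  disjoint_branch r hr i hi j hj hij :=
    (h.disjoint_branch r (hR' hr) i hi j hj hij).mono sdiff_subset sdiff_subset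
  disjoint_or_nested r hr r' hr' hne := by
    rw [star_sdiff (hX r hr), star_sdiff (hX r' hr')]
    refine (h.disjoint_or_nested r (hR' hr) r' (hR' hr') hne).imp
      (fun hd => hd.mono sdiff_subset sdiff_subset) ?_
    rintro ⟨i₀, hi₀, j₀, hj₀, hrr', hr'r⟩
    exact ⟨i₀, hi₀, j₀, hj₀, sdiff_sdiff_sdiff_subset hrr', sdiff_sdiff_sdiff_subset hr'r⟩

theorem mul_encard_le (hS : S.Finite) : (k : ℕ∞) * R.encard ≤ S.encard := by
  obtain ⟨n, hn⟩ : ∃ n, R.ncard = n := ⟨_, rfl⟩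
  induction n generalizing S R C with
  | zero =>
    rw [ncard_eq_zero (hS.subset h.subset)] at hn
    simp [hn]
  | succ n ih =>
    obtain ⟨r₀, hr₀⟩ := nonempty_of_ncard_ne_zero (by rw [hn]; omega)
    obtain ⟨r, hr, j, hj, hmin⟩ :=
      exists_branch_encard_le (C := C) ⟨r₀, hr₀, by linarith [h.three_le r₀ hr₀]⟩
    set X := C r j
    have hXS : X ⊆ S := h.branch_subset r hr j hj
    have hRX : ∀ r' ∈ R, r' ∉ X := fun r' hr' =>
      h.not_mem_branch_of_forall_encard_le hr hj (hS.subset hXS) hmin hr'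
    have h' : IsBranchSystem (S \ X) (R \ {r}) k m (fun r i => C r i \ X) :=
      h.sdiff sdiff_subset (fun r' hr' => hRX r' hr'.1) fun r' hr' i hi =>
        h.le_encard_branch_sdiff hr hr'.1 (Ne.symm hr'.2) hj (hRX r' hr'.1) hi
    have ih' := ih h' hS.sdiff <| by
      rw [ncard_sdiff_singleton_of_mem hr, hn, Nat.add_sub_cancel]
    calc (k : ℕ∞) * R.encard = k * (R \ {r}).encard + k := by
          rw [← encard_sdiff_singleton_add_one hr, mul_add, mul_one]
      _ ≤ (S \ X).encard + X.encard := add_le_add ih' (h.le_encard_branch r hr j hj)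
      _ = S.encard := encard_sdiff_add_encard_of_subset hXS

end IsBranchSystem

end BurtonKeane

theorem burton_keane_combinatorial_lemma_general
    {α : Type*} (S R : Set α) (hRS : R ⊆ S)
    (k : ℕ)
    (m : α → ℕ) (C : α → ℕ → Set α)
    (hIa : ∀ r ∈ R, 3 ≤ m r)
    (hIb : ∀ r ∈ R, ∀ i < m r, r ∉ C r i ∧ C r i ⊆ S)
    (hIc : ∀ r ∈ R, ∀ i < m r, (k : ℕ∞) ≤ (C r i).encard)
    (hdisj : ∀ r ∈ R, ∀ i < m r, ∀ j < m r, i ≠ j → Disjoint (C r i) (C r j))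
    (hII : ∀ r ∈ R, ∀ r' ∈ R, r ≠ r' →
      Disjoint ((⋃ j < m r, C r j) ∪ {r}) ((⋃ i < m r', C r' i) ∪ {r'}) ∨
      ∃ i₀ < m r', ∃ j₀ < m r,
        ((⋃ j < m r, C r j) ∪ {r}) \ C r j₀ ⊆ C r' i₀ ∧
        ((⋃ i < m r', C r' i) ∪ {r'}) \ C r' i₀ ⊆ C r j₀) :
    (k : ℕ∞) * R.encard ≤ S.encard := by
  rcases S.finite_or_infinite with hS | hS
  · have h : BurtonKeane.IsBranchSystem S R k m C :=
      ⟨hRS, hIa, fun r hr i hi => (hIb r hr i hi).1, fun r hr i hi => (hIb r hr i hi).2,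
        hIc, hdisj, hII⟩
    exact h.mul_encard_le hS
  · simp [hS.encard_eq]

/-- **The combinatorial lemma behind the Burton–Keane argument**
(Chatterjee–Sen, Lemma 7.3; Meester–Roy, Lemma 3.2).  Let `R` be a finite nonempty
subset of `S` such that every `r ∈ R` has `m r ≥ 3` pairwise disjoint "branches"
`C r 0, …, C r (m r - 1) ⊆ S`, each avoiding `r` and of cardinality at least `k`,
and such that any two distinct `r, r' ∈ R` satisfy condition (IIa) or (IIb) below.
Then `|S| ≥ k |R|`. -/
theorem burton_keane_combinatorial_lemma
    {α : Type*} (S R : Set α) (hRS : R ⊆ S) (hRfin : R.Finite) (hRne : R.Nonempty)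
    (k : ℕ) (hk : 0 < k)
    (m : α → ℕ) (C : α → ℕ → Set α)
    (hIa : ∀ r ∈ R, 3 ≤ m r)
    (hIb : ∀ r ∈ R, ∀ i < m r, r ∉ C r i ∧ C r i ⊆ S)
    (hIc : ∀ r ∈ R, ∀ i < m r, (k : ℕ∞) ≤ (C r i).encard)
    (hdisj : ∀ r ∈ R, ∀ i < m r, ∀ j < m r, i ≠ j → Disjoint (C r i) (C r j))
    (hII : ∀ r ∈ R, ∀ r' ∈ R, r ≠ r' →
      Disjoint ((⋃ j < m r, C r j) ∪ {r}) ((⋃ i < m r', C r' i) ∪ {r'}) ∨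
      ∃ i₀ < m r', ∃ j₀ < m r,
        ((⋃ j < m r, C r j) ∪ {r}) \ C r j₀ ⊆ C r' i₀ ∧
        ((⋃ i < m r', C r' i) ∪ {r'}) \ C r' i₀ ⊆ C r j₀) :
    (k : ℕ∞) * R.encard ≤ S.encard :=
  burton_keane_combinatorial_lemma_general S R hRS k m C hIa hIb hIc hdisj hII
end
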